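/- Let G be a connected threshold graph with c ≥ 3 type-1 vertices and BZP sequence b₁, …, b_z (z ≥ 1, 1 ≤ b_i ≤ c−1); set S' = ∑ b_i and F₁ = ∑ b_i². Then the spectral radius ρ of G satisfies (ρ − c + 1)·(ρ(ρ+1) − S') ≤ F₁; equivalently, 1 + ρ is at most the greatest real root of x³ − (c+1)x² + (c − S')x + (cS' − F₁). -/

import Mathlib

/-!
The entrywise absolute value `w` of a `ρ`-eigenvector of the adjacency matrix satisfies
`ρ w ≤ A w`. Only the split structure of `G` matters: a clique `K` of size `c` and an
independent set whose vertices have degrees `d j ≤ b j`. Let `W` be the largest entry of `w`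
on `K`, `T` the sum of `w` over `K`, and `P`, `Q` the plain and `d`-weighted sums of `w` over
the independent set. Reading `ρ w ≤ A w` at the maximising vertex, on the independent set, and
summed over `K` gives `(ρ + 1) W ≤ T + P`, `ρ P ≤ S' W`, `ρ Q ≤ F₁ W` and
`(ρ - c + 1) T ≤ Q`. Since `ρ ≥ c - 1` (Rayleigh quotient of the indicator of `K`), eliminating
`T`, `P`, `Q` and dividing by `W > 0` yields the bound.
-/

open Matrix Finset SimpleGraph

namespace Matrix

variable {n : Type*} [Fintype n] [DecidableEq n]

theorem exists_mulVec_eq_smul_of_mem_spectrum {K : Type*} [Field K] {A : Matrix n n K} {μ : K}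
    (h : μ ∈ spectrum K A) : ∃ v ≠ 0, A *ᵥ v = μ • v := by
  rw [← spectrum_toLin', ← Module.End.hasEigenvalue_iff_mem_spectrum] at h
  obtain ⟨v, hv⟩ := h.exists_hasEigenvector
  exact ⟨v, hv.2, by simpa using hv.apply_eq_smul⟩

theorem IsHermitian.dotProduct_mulVec_le {A : Matrix n n ℝ} (hA : A.IsHermitian) {r : ℝ}
    (hr : ∀ μ ∈ spectrum ℝ A, μ ≤ r) (x : n → ℝ) : x ⬝ᵥ A *ᵥ x ≤ r * (x ⬝ᵥ x) := by
  have hpsd : (algebraMap ℝ _ r - A).PosSemidef := by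
    refine posSemidef_iff_isHermitian_and_spectrum_nonneg.mpr ⟨?_, ?_⟩
    · exact (isHermitian_diagonal_of_self_adjoint _ (.all _)).sub hA
    · rw [← spectrum.singleton_sub_eq]
      rintro _ ⟨_, rfl, μ, hμ, rfl⟩
      simpa using hr μ hμ
  have := hpsd.dotProduct_mulVec_nonneg x
  simpa only [star_trivial, Algebra.algebraMap_eq_smul_one, sub_mulVec, smul_mulVec, one_mulVec,
    dotProduct_sub, dotProduct_smul, smul_eq_mul, sub_nonneg] using this

theorem exists_nonneg_smul_le_mulVec {A : Matrix n n ℝ} (hA : ∀ i j, 0 ≤ A i j) {ρ : ℝ}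
    (hρ : 0 ≤ ρ) (hρA : ρ ∈ spectrum ℝ A) :
    ∃ w : n → ℝ, 0 ≤ w ∧ w ≠ 0 ∧ ∀ i, ρ * w i ≤ (A *ᵥ w) i := by
  obtain ⟨v, hv, hAv⟩ := exists_mulVec_eq_smul_of_mem_spectrum hρA
  refine ⟨fun i => |v i|, fun i => abs_nonneg _, fun h => hv (funext fun i => ?_), fun i => ?_⟩
  · simpa using congrFun h i
  calc ρ * |v i| = |(A *ᵥ v) i| := by simp [hAv, abs_mul, abs_of_nonneg hρ]
    _ ≤ ∑ j, |A i j * v j| := abs_sum_le_sum_abs _ _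
    _ = (A *ᵥ fun j => |v j|) i := by simp [mulVec, dotProduct, abs_mul, abs_of_nonneg (hA _ _)]

end Matrix

namespace SimpleGraph

variable {V : Type*} [Fintype V] [DecidableEq V] {G : SimpleGraph V} [DecidableRel G.Adj]
  {w : V → ℝ}

theorem add_one_mul_le_sum_of_le_sum_neighborFinset (hw : 0 ≤ w) {ρ : ℝ} {v : V}
    (h : ρ * w v ≤ ∑ u ∈ G.neighborFinset v, w u) : (ρ + 1) * w v ≤ ∑ u, w u := by
  have : ∑ u ∈ G.neighborFinset v, w u ≤ ∑ u ∈ univ.erase v, w u :=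
    sum_le_sum_of_subset_of_nonneg
      (fun u hu => mem_erase.2 ⟨(G.ne_of_adj ((mem_neighborFinset _ _ _).1 hu)).symm, mem_univ u⟩)
      fun u _ _ => hw u
  rw [← add_sum_erase univ w (mem_univ v)]
  linarith

theorem sum_sum_neighborFinset_le (hw : 0 ≤ w) (K : Finset V) :
    ∑ k ∈ K, ∑ u ∈ G.neighborFinset k, w u
      ≤ (#K - 1) * ∑ k ∈ K, w k + ∑ j ∈ Kᶜ, G.degree j * w j := by
  have hswap : ∑ k ∈ K, ∑ u ∈ G.neighborFinset k, w u = ∑ u, #{k ∈ K | G.Adj u k} * w u := by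
    simp_rw [neighborFinset_eq_filter, sum_filter]
    rw [sum_comm]
    simp [← sum_filter, G.adj_comm]
  rw [hswap, ← sum_add_sum_compl K, mul_sum]
  gcongr with u hu j hj
  · exact hw u
  · rw [← Nat.cast_one, ← Nat.cast_sub (card_pos.2 ⟨u, hu⟩), ← card_erase_of_mem hu]
    exact_mod_cast card_le_card fun k hk => by
      simp only [mem_filter] at hk
      exact mem_erase.2 ⟨hk.2.ne.symm, hk.1⟩
  · exact hw j
  · rw [← card_neighborFinset_eq_degree]
    exact_mod_cast card_le_card fun k hk => by simpa using (mem_filter.1 hk).2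

theorem sum_neighborFinset_le_degree_mul {K : Finset V} (hK : G.IsIndepSet ↑Kᶜ) {j : V}
    (hj : j ∉ K) {W : ℝ} (hW : ∀ k ∈ K, w k ≤ W) :
    ∑ u ∈ G.neighborFinset j, w u ≤ G.degree j * W := by
  rw [← card_neighborFinset_eq_degree, ← nsmul_eq_mul]
  refine sum_le_card_nsmul _ _ _ fun u hu => hW u ?_
  rw [mem_neighborFinset] at hu
  by_contra hu'
  exact hK (by simpa using hj) (by simpa using hu') hu.ne hu

theorem IsClique.card_sub_one_le {s : Finset V} (hs : G.IsClique (s : Set V)) (hne : s.Nonempty)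
    {r : ℝ} (hr : ∀ μ ∈ spectrum ℝ (G.adjMatrix ℝ), μ ≤ r) : (#s : ℝ) - 1 ≤ r := by
  set x : V → ℝ := fun u => if u ∈ s then 1 else 0
  have hAx : ∀ v ∈ s, (G.adjMatrix ℝ *ᵥ x) v = #s - 1 := by
    intro v hv
    have : {u ∈ G.neighborFinset v | u ∈ s} = s.erase v := by
      ext u
      simp only [mem_filter, mem_neighborFinset, mem_erase]
      exact ⟨fun ⟨h, hu⟩ => ⟨h.ne.symm, hu⟩, fun ⟨h, hu⟩ => ⟨hs hv hu (Ne.symm h), hu⟩⟩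
    rw [adjMatrix_mulVec_apply, sum_boole, this, card_erase_of_mem hv,
      Nat.cast_sub (card_pos.2 ⟨v, hv⟩), Nat.cast_one]
  have hxx : x ⬝ᵥ x = #s := by simp [x, dotProduct]
  have hxAx : x ⬝ᵥ (G.adjMatrix ℝ *ᵥ x) = #s * (#s - 1) := by
    simp only [dotProduct, x, ite_mul, one_mul, zero_mul, ← sum_filter, filter_mem_eq_inter,
      univ_inter]
    rw [sum_congr rfl hAx, sum_const, nsmul_eq_mul]
  have h := (G.isHermitian_adjMatrix ℝ).dotProduct_mulVec_le hr x
  rw [hxx, hxAx, mul_comm r] at h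
  exact le_of_mul_le_mul_left h (by exact_mod_cast hne.card_pos)

theorem spectral_bound_of_le_sum_neighborFinset {K : Finset V} (hKc : G.IsIndepSet ↑Kᶜ)
    {ρ : ℝ} (hρ : 0 ≤ ρ) (hρK : 0 ≤ ρ - #K + 1) (hw : 0 ≤ w)
    (hρw : ∀ v, ρ * w v ≤ ∑ u ∈ G.neighborFinset v, w u) {k₀ : V} (hmax : ∀ k ∈ K, w k ≤ w k₀)
    (hk₀ : 0 < w k₀) :
    (ρ - #K + 1) * (ρ * (ρ + 1) - ∑ j ∈ Kᶜ, (G.degree j : ℝ)) ≤ ∑ j ∈ Kᶜ, (G.degree j : ℝ) ^ 2 := by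
  have hind : ∀ j ∉ K, ρ * w j ≤ G.degree j * w k₀ := fun j hj =>
    (hρw j).trans (sum_neighborFinset_le_degree_mul hKc hj hmax)
  have h1 : (ρ + 1) * w k₀ ≤ ∑ k ∈ K, w k + ∑ j ∈ Kᶜ, w j :=
    (add_one_mul_le_sum_of_le_sum_neighborFinset hw (hρw k₀)).trans_eq (sum_add_sum_compl K w).symm
  have h2 : ρ * ∑ j ∈ Kᶜ, w j ≤ (∑ j ∈ Kᶜ, (G.degree j : ℝ)) * w k₀ := by
    rw [mul_sum, sum_mul]
    exact sum_le_sum fun j hj => hind j (mem_compl.1 hj)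
  have h3 : ρ * ∑ j ∈ Kᶜ, G.degree j * w j ≤ (∑ j ∈ Kᶜ, (G.degree j : ℝ) ^ 2) * w k₀ := by
    rw [mul_sum, sum_mul]
    refine sum_le_sum fun j hj => ?_
    nlinarith [hind j (mem_compl.1 hj), (Nat.cast_nonneg (G.degree j) : (0 : ℝ) ≤ _)]
  have h4 : (ρ - #K + 1) * ∑ k ∈ K, w k ≤ ∑ j ∈ Kᶜ, G.degree j * w j := by
    have := sum_sum_neighborFinset_le (G := G) hw K
    have := sum_le_sum fun k (_ : k ∈ K) => hρw k
    rw [← mul_sum] at this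
    linarith
  nlinarith [mul_le_mul_of_nonneg_left h1 (mul_nonneg hρK hρ),
    mul_le_mul_of_nonneg_left h4 hρ, mul_le_mul_of_nonneg_left h2 hρK]

theorem spectral_bound_of_isClique_of_isIndepSet_compl {K : Finset V}
    (hK : G.IsClique (K : Set V)) (hKc : G.IsIndepSet ↑Kᶜ) (hK1 : 1 < #K) {ρ : ℝ}
    (hρ : ρ ∈ spectrum ℝ (G.adjMatrix ℝ)) (hρ' : ∀ μ ∈ spectrum ℝ (G.adjMatrix ℝ), |μ| ≤ ρ) :
    (ρ - #K + 1) * (ρ * (ρ + 1) - ∑ j ∈ Kᶜ, (G.degree j : ℝ)) ≤ ∑ j ∈ Kᶜ, (G.degree j : ℝ) ^ 2 := by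
  have hKne : K.Nonempty := card_pos.1 (by omega)
  have hρK : (#K : ℝ) - 1 ≤ ρ :=
    hK.card_sub_one_le hKne fun μ hμ => (le_abs_self μ).trans (hρ' μ hμ)
  have hρ0 : 0 < ρ := by
    have : (1 : ℝ) < #K := by exact_mod_cast hK1
    linarith
  obtain ⟨w, hw0, hw, hρw⟩ := exists_nonneg_smul_le_mulVec
    (fun i j => by rw [adjMatrix_apply]; split_ifs <;> norm_num) hρ0.le hρ
  simp only [adjMatrix_mulVec_apply] at hρw
  obtain ⟨k₀, -, hmax⟩ := K.exists_max_image w hKne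
  refine spectral_bound_of_le_sum_neighborFinset hKc hρ0.le (by linarith) hw0 hρw hmax ?_
  by_contra! hk₀
  refine hw (funext fun v => le_antisymm (?_ : w v ≤ 0) (hw0 v))
  by_cases hv : v ∈ K
  · exact (hmax v hv).trans hk₀
  · have := (hρw v).trans (sum_neighborFinset_le_degree_mul hKc hv hmax)
    have := mul_nonpos_of_nonneg_of_nonpos (Nat.cast_nonneg (G.degree v)) hk₀
    nlinarith

end SimpleGraph

/-- A connected threshold graph with `c ≥ 3` type-1 vertices and BZP
sequence `b₁, …, b_z` (`z ≥ 1`, `1 ≤ bᵢ ≤ c−1`) has spectral radius `ρ` satisfying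
`(ρ − c + 1)·(ρ(ρ+1) − S') ≤ F₁`, where `S' = ∑ bᵢ` and `F₁ = ∑ bᵢ²`; equivalently,
`1 + ρ` is at most the greatest real root of `x³ − (c+1)x² + (c−S')x + (cS' − F₁)`. -/
theorem threshold_upper_bound (c z : ℕ) (hc : 3 ≤ c) (hz : 1 ≤ z)
    (b : Fin z → ℕ)
    (G : SimpleGraph (Fin (c + z))) [DecidableRel G.Adj]
    (hG : ∀ u v : Fin (c + z), G.Adj u v ↔ u ≠ v ∧
      ((u.1 < c ∧ v.1 < c) ∨
       (u.1 < c ∧ c ≤ v.1 ∧ u.1 < b ⟨v.1 - c, by have := v.isLt; omega⟩) ∨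
       (v.1 < c ∧ c ≤ u.1 ∧ v.1 < b ⟨u.1 - c, by have := u.isLt; omega⟩)))
    (ρ : ℝ) (hρ₁ : ρ ∈ spectrum ℝ (G.adjMatrix ℝ))
    (hρ₂ : ∀ μ ∈ spectrum ℝ (G.adjMatrix ℝ), |μ| ≤ ρ) :
    (ρ - c + 1) * (ρ * (ρ + 1) - ∑ i, (b i : ℝ)) ≤ ∑ i, (b i : ℝ) ^ 2 := by
  set K : Finset (Fin (c + z)) := {k | (k : ℕ) < c}
  have hKcard : #K = c := by simp [K, Fin.card_filter_val_lt]
  have hK : G.IsClique (K : Set (Fin (c + z))) := fun u hu v hv huv =>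
    (hG u v).2 ⟨huv, Or.inl ⟨by simpa [K] using hu, by simpa [K] using hv⟩⟩
  have hKc : G.IsIndepSet ↑Kᶜ := fun u hu v hv _ huv => by
    simp only [compl_filter, not_lt, coe_filter, mem_univ, true_and, Set.mem_ofPred_eq, K] at hu hv
    rw [hG] at huv
    omega
  have hsum : ∀ f : Fin (c + z) → ℝ, ∑ k ∈ Kᶜ, f k = ∑ j, f (Fin.natAdd c j) := fun f => by
    rw [compl_filter, sum_filter, Fin.sum_univ_add]
    simp
  have hdeg : ∀ j, G.degree (Fin.natAdd c j) ≤ b j := fun j => by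
    rw [← card_neighborFinset_eq_degree]
    calc _ ≤ #{k : Fin (c + z) | (k : ℕ) < b j} := card_le_card fun k hk => by
          rw [mem_neighborFinset, hG] at hk
          simp only [Fin.val_natAdd, add_tsub_cancel_left, Fin.eta, mem_filter, mem_univ,
            true_and] at hk ⊢
          omega
      _ ≤ b j := by rw [Fin.card_filter_val_lt]; exact min_le_right _ _
  have hρK : (c : ℝ) - 1 ≤ ρ := by
    simpa [hKcard] using hK.card_sub_one_le (card_pos.1 (by omega))
      fun μ hμ => (le_abs_self μ).trans (hρ₂ μ hμ)
  calc (ρ - c + 1) * (ρ * (ρ + 1) - ∑ i, (b i : ℝ))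
      ≤ (ρ - #K + 1) * (ρ * (ρ + 1) - ∑ k ∈ Kᶜ, (G.degree k : ℝ)) := by
        rw [hKcard, hsum]
        gcongr with j
        · linarith
        · exact_mod_cast hdeg j
    _ ≤ ∑ k ∈ Kᶜ, (G.degree k : ℝ) ^ 2 :=
        spectral_bound_of_isClique_of_isIndepSet_compl hK hKc (by omega) hρ₁ hρ₂
    _ ≤ ∑ i, (b i : ℝ) ^ 2 := by
        rw [hsum]
        gcongr with j
        exact_mod_cast hdeg j
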